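/- arXiv:1905.09024 — 8 statements merged into one kernel-verified Lean document; each statement's English description precedes it below -/
import Mathlib

section
/- Let v : ℝ → ℝ be an odd differentiable function and f : ℝ → ℝ be twice differentiable. Then the square of the Dunkl operator equals the Hamiltonian with reflection: for all x ∈ ℝ, (L_v (L_v f))(x) = −f''(x) + v(x)²·f(x) − v'(x)·f(−x). -/
/-- The Dunkl operator `L_v f : x ↦ d/dx[f(-x)] + v(x)·f(x)`. -/
noncomputable def dunkl (v f : ℝ → ℝ) : ℝ → ℝ :=
  fun x => deriv (f ∘ Neg.neg) x + v x * f x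

theorem dunkl_apply (v f : ℝ → ℝ) (x : ℝ) :
    dunkl v f x = -deriv f (-x) + v x * f x := by
  rw [dunkl, Function.comp_def, deriv_comp_neg]

theorem dunkl_comp_neg_of_odd {v : ℝ → ℝ} (hv : ∀ x, v (-x) = -v x) (f : ℝ → ℝ) :
    dunkl v f ∘ Neg.neg = fun x => -deriv f x - v x * f (-x) := by
  funext x
  rw [Function.comp_apply, dunkl_apply, neg_neg, hv]
  ring

theorem hasDerivAt_dunkl_comp_neg_of_odd {v f : ℝ → ℝ} {x : ℝ} (hv : ∀ x, v (-x) = -v x)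
    (hvx : DifferentiableAt ℝ v x) (hfx : DifferentiableAt ℝ f (-x))
    (hf'x : DifferentiableAt ℝ (deriv f) x) :
    HasDerivAt (dunkl v f ∘ Neg.neg)
      (-deriv (deriv f) x - (deriv v x * f (-x) - v x * deriv f (-x))) x := by
  have hf_neg : HasDerivAt (fun y => f (-y)) (-deriv f (-x)) x := by
    simpa [Function.comp_def] using hfx.hasDerivAt.comp x (hasDerivAt_neg x)
  rw [dunkl_comp_neg_of_odd hv]
  exact (hf'x.hasDerivAt.fun_neg.fun_sub (hvx.hasDerivAt.fun_mul hf_neg)).congr_deriv (by ring)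

/-- The square of the Dunkl operator is the Hamiltonian with reflection. -/
theorem dunkl_sq_eq_hamiltonian (v f : ℝ → ℝ)
    (hv : ∀ x : ℝ, v (-x) = -v x) (hv' : Differentiable ℝ v)
    (hf : Differentiable ℝ f) (hf' : Differentiable ℝ (deriv f)) :
    ∀ x : ℝ, dunkl v (dunkl v f) x =
      -(deriv (deriv f) x) + (v x) ^ 2 * f x - deriv v x * f (-x) := by
  intro x
  rw [dunkl, (hasDerivAt_dunkl_comp_neg_of_odd hv (hv' x) (hf (-x)) (hf' x)).deriv,
    dunkl_apply]
  ring
end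

section
/- Let v : ℝ → ℝ be an odd function, ν ∈ ℝ, and let ψ : ℝ → ℝ be differentiable with L_v ψ = ν·ψ (pointwise on ℝ). Then the reflected function ψ̃ : x ↦ ψ(−x) satisfies L_v ψ̃ = −ν·ψ̃ pointwise on ℝ; thus eigenfunctions of L_v come in pairs with opposite eigenvalues ±ν. -/
theorem dunkl_comp_neg {v : ℝ → ℝ} (hv : ∀ x : ℝ, v (-x) = -v x) (f : ℝ → ℝ) (x : ℝ) :
    dunkl v (fun y => f (-y)) x = -dunkl v f (-x) := by
  have hderiv : deriv (fun y => f (-y)) (-x) = -deriv f x := by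
    simpa using deriv_comp_neg (f := f) (x := -x)
  simp only [dunkl, Function.comp_def, neg_neg, hderiv, hv]
  ring

theorem dunkl_eigen_reflection_general (v ψ : ℝ → ℝ) (ν : ℝ)
    (hv : ∀ x : ℝ, v (-x) = -v x)
    (heig : ∀ x : ℝ, dunkl v ψ x = ν * ψ x) :
    ∀ x : ℝ, dunkl v (fun y => ψ (-y)) x = -ν * ψ (-x) := by
  intro x
  rw [dunkl_comp_neg hv, heig, neg_mul]

/-- Eigenfunctions of the Dunkl operator come in pairs with opposite eigenvalues. -/
theorem dunkl_eigen_reflection (v ψ : ℝ → ℝ) (ν : ℝ)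
    (hv : ∀ x : ℝ, v (-x) = -v x) (hψ : Differentiable ℝ ψ)
    (heig : ∀ x : ℝ, dunkl v ψ x = ν * ψ x) :
    ∀ x : ℝ, dunkl v (fun y => ψ (-y)) x = -ν * ψ (-x) :=
  dunkl_eigen_reflection_general v ψ ν hv heig
end

section
/- Let v : ℝ → ℝ be an odd differentiable function, ν ∈ ℝ, and let ψ : ℝ → ℝ be twice differentiable with L_v ψ = ν·ψ pointwise on ℝ. Then ψ is an eigenfunction of the Hamiltonian with reflection with eigenvalue ν²: for all x ∈ ℝ, −ψ''(x) + v(x)²·ψ(x) − v'(x)·ψ(−x) = ν²·ψ(x). -/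
theorem deriv_neg_of_dunkl_eigen {v ψ : ℝ → ℝ} {ν : ℝ}
    (heig : ∀ x, dunkl v ψ x = ν * ψ x) (x : ℝ) : deriv ψ (-x) = (v x - ν) * ψ x := by
  linarith [dunkl_apply v ψ x ▸ heig x]

theorem deriv_eq_of_dunkl_eigen {v ψ : ℝ → ℝ} {ν : ℝ} (hv : ∀ x, v (-x) = -v x)
    (heig : ∀ x, dunkl v ψ x = ν * ψ x) : deriv ψ = fun x => -(v x + ν) * ψ (-x) := by
  funext x
  rw [← neg_neg x, deriv_neg_of_dunkl_eigen heig, hv, neg_neg]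
  ring

theorem dunkl_eigen_implies_hamiltonian_eigen_general (v ψ : ℝ → ℝ) (ν : ℝ)
    (hv : ∀ x : ℝ, v (-x) = -v x) (hv' : Differentiable ℝ v)
    (hψ : Differentiable ℝ ψ)
    (heig : ∀ x : ℝ, dunkl v ψ x = ν * ψ x) :
    ∀ x : ℝ, -(deriv (deriv ψ) x) + (v x) ^ 2 * ψ x - deriv v x * ψ (-x)
      = ν ^ 2 * ψ x := by
  intro x
  have hψ'' : HasDerivAt (fun y => -(v y + ν) * ψ (-y))
      (-deriv v x * ψ (-x) + (v x + ν) * deriv ψ (-x)) x :=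
    (((hv' x).hasDerivAt.add_const ν).fun_neg.fun_mul
      ((hψ (-x)).hasDerivAt.comp x (hasDerivAt_neg x))).congr_deriv
        (by rw [Function.comp_apply]; ring)
  rw [← deriv_eq_of_dunkl_eigen hv heig] at hψ''
  rw [hψ''.deriv, deriv_neg_of_dunkl_eigen heig]
  ring

/-- An eigenfunction of the Dunkl operator with eigenvalue ν is an eigenfunction of
the Hamiltonian with reflection with eigenvalue ν². -/
theorem dunkl_eigen_implies_hamiltonian_eigen (v ψ : ℝ → ℝ) (ν : ℝ)
    (hv : ∀ x : ℝ, v (-x) = -v x) (hv' : Differentiable ℝ v)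
    (hψ : Differentiable ℝ ψ) (hψ' : Differentiable ℝ (deriv ψ))
    (heig : ∀ x : ℝ, dunkl v ψ x = ν * ψ x) :
    ∀ x : ℝ, -(deriv (deriv ψ) x) + (v x) ^ 2 * ψ x - deriv v x * ψ (-x)
      = ν ^ 2 * ψ x :=
  dunkl_eigen_implies_hamiltonian_eigen_general v ψ ν hv hv' hψ heig
end

section
/- (Lemma 1, core computation.) Let v : ℝ → ℝ be an odd differentiable function, E ∈ ℝ, let e : ℝ → ℝ be an even twice differentiable function satisfying −e''(x) + (v(x)² − v'(x))·e(x) = E·e(x) for all x, and let o : ℝ → ℝ be an odd twice differentiable function satisfying −o''(x) + (v(x)² + v'(x))·o(x) = E·o(x) for all x. Then both ψ₊ = e + o and ψ₋ = e − o are eigenfunctions of the Hamiltonian with reflection with eigenvalue E: H_v ψ± = E·ψ± pointwise on ℝ. -/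
/-! On even functions `H_v` acts as `H₁ = -∂² + v² - v'`, on odd ones as `H₂ = -∂² + v² + v'`;
since `H_v` is linear, an even `H₁`-eigenfunction plus or minus an odd `H₂`-eigenfunction
with the same eigenvalue is an `H_v`-eigenfunction. -/

/-- The Hamiltonian with reflection `H_v f : x ↦ -f''(x) + v(x)²·f(x) - v'(x)·f(-x)`. -/
noncomputable def ham (v f : ℝ → ℝ) : ℝ → ℝ :=
  fun x => -(deriv (deriv f) x) + (v x) ^ 2 * f x - deriv v x * f (-x)

section

variable {v f g : ℝ → ℝ}

theorem ham_apply_of_even (hf : Function.Even f) (x : ℝ) :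
    ham v f x = -(deriv (deriv f) x) + ((v x) ^ 2 - deriv v x) * f x := by
  rw [ham, hf]
  ring

theorem ham_apply_of_odd (hf : Function.Odd f) (x : ℝ) :
    ham v f x = -(deriv (deriv f) x) + ((v x) ^ 2 + deriv v x) * f x := by
  rw [ham, hf]
  ring

variable (hf : Differentiable ℝ f) (hf' : Differentiable ℝ (deriv f))
  (hg : Differentiable ℝ g) (hg' : Differentiable ℝ (deriv g))
include hf hf' hg hg'

theorem ham_add : ham v (f + g) = ham v f + ham v g := by
  have hderiv : deriv (f + g) = deriv f + deriv g := funext fun x => deriv_add (hf x) (hg x)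
  funext x
  simp only [ham, Pi.add_apply, hderiv, deriv_add (hf' x) (hg' x)]
  ring

theorem ham_sub : ham v (f - g) = ham v f - ham v g := by
  have hderiv : deriv (f - g) = deriv f - deriv g := funext fun x => deriv_sub (hf x) (hg x)
  funext x
  simp only [ham, Pi.sub_apply, hderiv, deriv_sub (hf' x) (hg' x)]
  ring

end

theorem ham_eigen_of_even_odd_parts_general (v e o : ℝ → ℝ) (E : ℝ)
    (he_even : ∀ x : ℝ, e (-x) = e x)
    (he : Differentiable ℝ e) (he' : Differentiable ℝ (deriv e))
    (he_eig : ∀ x : ℝ, -(deriv (deriv e) x) + ((v x) ^ 2 - deriv v x) * e x = E * e x)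
    (ho_odd : ∀ x : ℝ, o (-x) = -o x)
    (ho : Differentiable ℝ o) (ho' : Differentiable ℝ (deriv o))
    (ho_eig : ∀ x : ℝ, -(deriv (deriv o) x) + ((v x) ^ 2 + deriv v x) * o x = E * o x) :
    (∀ x : ℝ, ham v (fun y => e y + o y) x = E * (e x + o x)) ∧
    (∀ x : ℝ, ham v (fun y => e y - o y) x = E * (e x - o x)) := by
  have hE : ∀ x, ham v e x = E * e x := fun x => (ham_apply_of_even he_even x).trans (he_eig x)
  have hO : ∀ x, ham v o x = E * o x := fun x => (ham_apply_of_odd ho_odd x).trans (ho_eig x)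
  constructor <;> intro x
  · change ham v (e + o) x = _
    rw [ham_add he he' ho ho', Pi.add_apply, hE, hO, mul_add]
  · change ham v (e - o) x = _
    rw [ham_sub he he' ho ho', Pi.sub_apply, hE, hO, mul_sub]

/-- Lemma 1, core computation: sums and differences of even eigenfunctions of
`H₁ = -∂² + v² - v'` and odd eigenfunctions of `H₂ = -∂² + v² + v'` with a common
eigenvalue `E` are eigenfunctions of the Hamiltonian with reflection. -/
theorem ham_eigen_of_even_odd_parts (v e o : ℝ → ℝ) (E : ℝ)
    (hv : ∀ x : ℝ, v (-x) = -v x) (hv' : Differentiable ℝ v)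
    (he_even : ∀ x : ℝ, e (-x) = e x)
    (he : Differentiable ℝ e) (he' : Differentiable ℝ (deriv e))
    (he_eig : ∀ x : ℝ, -(deriv (deriv e) x) + ((v x) ^ 2 - deriv v x) * e x = E * e x)
    (ho_odd : ∀ x : ℝ, o (-x) = -o x)
    (ho : Differentiable ℝ o) (ho' : Differentiable ℝ (deriv o))
    (ho_eig : ∀ x : ℝ, -(deriv (deriv o) x) + ((v x) ^ 2 + deriv v x) * o x = E * o x) :
    (∀ x : ℝ, ham v (fun y => e y + o y) x = E * (e x + o x)) ∧
    (∀ x : ℝ, ham v (fun y => e y - o y) x = E * (e x - o x)) :=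
  ham_eigen_of_even_odd_parts_general v e o E he_even he he' he_eig ho_odd ho ho' ho_eig
end

section
/- (Orthogonality of the Hermite-type Dunkl-SUSY polynomials.) For n ∈ ℤ define Q_0(x) = 1, and for n ≥ 1: Q_n(x) = H_{2n}(x) + 2√n·H_{2n−1}(x) and Q_{−n}(x) = H_{2n}(x) − 2√n·H_{2n−1}(x). Then for all integers n ≠ m, ∫_{−∞}^{∞} e^{−x²}·Q_n(x)·Q_m(x) dx = 0, and for every integer n with |n| = k ≥ 1, ∫_{−∞}^{∞} e^{−x²}·Q_n(x)² dx = 2·2^{2k}·(2k)!·√π. -/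
open MeasureTheory

/-- Physicists' Hermite polynomials: `H₀ = 1`, `H₁(x) = 2x`,
`H_{n+2}(x) = 2x·H_{n+1}(x) - 2(n+1)·H_n(x)`. -/
noncomputable def hermite : ℕ → ℝ → ℝ
  | 0 => fun _ => 1
  | 1 => fun x => 2 * x
  | (n + 2) => fun x => 2 * x * hermite (n + 1) x - 2 * ((n : ℝ) + 1) * hermite n x

/-- The Hermite-type Dunkl-SUSY polynomials: `Q₀ = 1`,
`Q_{±n} = H_{2n} ± 2√n·H_{2n-1}` for `n ≥ 1`. -/
noncomputable def QHermite (n : ℤ) (x : ℝ) : ℝ :=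
  if n = 0 then 1
  else hermite (2 * n.natAbs) x +
    (if 0 < n then 1 else -1) * (2 * Real.sqrt n.natAbs * hermite (2 * n.natAbs - 1) x)

/-!
Work with real polynomials and the functional `P ↦ ∫ exp(-x²) P(x) dx`. Integration by parts makes
`d/dx` adjoint to the raising operator `2x - d/dx`, which sends `H_n` to `H_{n+1}`; together with
`H_n' = 2n H_{n-1}` this gives `⟨H_{m+1}, H_n⟩ = 2n ⟨H_m, H_{n-1}⟩`, hence the classical
orthogonality `⟨H_m, H_n⟩ = δ_{mn} 2ⁿ n! √π`. Expanding `Q_n Q_m` with `|n| = |m| = k`, only the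
diagonal terms survive, and the coefficient `2√k` is exactly the one with
`(2√k)² ‖H_{2k-1}‖² = ‖H_{2k}‖²`: the two contributions add up for `m = n` and cancel for `m = -n`.
-/

open Polynomial hiding hermite
open Real
open scoped Nat

noncomputable def hermitePoly : ℕ → ℝ[X]
  | 0 => 1
  | 1 => 2 * X
  | n + 2 => 2 * X * hermitePoly (n + 1) - 2 * ((n : ℝ[X]) + 1) * hermitePoly n

theorem eval_hermitePoly : ∀ (n : ℕ) (x : ℝ), (hermitePoly n).eval x = hermite n x
  | 0, x => by simp [hermitePoly, hermite]
  | 1, x => by simp [hermitePoly, hermite]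
  | n + 2, x => by
    simp [hermitePoly, hermite, eval_hermitePoly (n + 1) x, eval_hermitePoly n x]

theorem hermitePoly_succ (n : ℕ) :
    hermitePoly (n + 1) = 2 * X * hermitePoly n - 2 * (n : ℝ[X]) * hermitePoly (n - 1) := by
  cases n with
  | zero => simp [hermitePoly]
  | succ k => rw [hermitePoly]; push_cast; ring

theorem derivative_hermitePoly :
    ∀ n : ℕ, derivative (hermitePoly n) = 2 * (n : ℝ[X]) * hermitePoly (n - 1)
  | 0 => by simp [hermitePoly]
  | 1 => by simp [hermitePoly]
  | n + 2 => by
    rw [show n + 2 - 1 = n + 1 from rfl]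
    simp only [hermitePoly, derivative_sub, derivative_mul, derivative_ofNat, derivative_X,
      derivative_add, derivative_natCast, derivative_one, derivative_hermitePoly (n + 1),
      derivative_hermitePoly n, Nat.add_sub_cancel, Nat.cast_add, Nat.cast_ofNat]
    linear_combination (-(2 * ((n : ℝ[X]) + 1))) * hermitePoly_succ n

theorem hermitePoly_succ_eq_sub_derivative (n : ℕ) :
    hermitePoly (n + 1) = 2 * X * hermitePoly n - derivative (hermitePoly n) := by
  rw [hermitePoly_succ, derivative_hermitePoly]

theorem integrable_exp_neg_mul_sq_mul_eval {b : ℝ} (hb : 0 < b) (P : ℝ[X]) :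
    Integrable fun x : ℝ => exp (-b * x ^ 2) * P.eval x := by
  induction P using Polynomial.induction_on' with
  | add p q hp hq => simp only [eval_add, mul_add]; exact hp.add hq
  | monomial n a =>
    have hmono :=
      integrable_rpow_mul_exp_neg_mul_sq hb (s := n) (neg_one_lt_zero.trans_le n.cast_nonneg)
    refine (hmono.const_mul a).congr (ae_of_all _ fun x => ?_)
    simp only [rpow_natCast, eval_monomial]
    ring

theorem integrable_exp_neg_sq_mul_eval (P : ℝ[X]) :
    Integrable fun x : ℝ => exp (-x ^ 2) * P.eval x := by
  simpa using integrable_exp_neg_mul_sq_mul_eval one_pos P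

noncomputable def gaussianIntegral : ℝ[X] →ₗ[ℝ] ℝ where
  toFun P := ∫ x : ℝ, exp (-x ^ 2) * P.eval x
  map_add' P Q := by
    simp only [eval_add, mul_add]
    exact integral_add (integrable_exp_neg_sq_mul_eval P) (integrable_exp_neg_sq_mul_eval Q)
  map_smul' a P := by
    simp only [eval_smul, smul_eq_mul, RingHom.id_apply, mul_left_comm _ a]
    exact integral_const_mul a _

theorem gaussianIntegral_apply (P : ℝ[X]) :
    gaussianIntegral P = ∫ x : ℝ, exp (-x ^ 2) * P.eval x := rfl

theorem gaussianIntegral_one : gaussianIntegral 1 = √π := by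
  rw [gaussianIntegral_apply]; simpa using integral_gaussian 1

theorem gaussianIntegral_derivative (P : ℝ[X]) :
    gaussianIntegral (derivative P) = gaussianIntegral (2 * X * P) := by
  have hgauss (x : ℝ) : HasDerivAt (fun x => exp (-x ^ 2)) (exp (-x ^ 2) * (-(2 * x))) x := by
    simpa using (hasDerivAt_pow 2 x).neg.exp
  have hparts := integral_mul_deriv_eq_deriv_mul_of_integrable (fun x _ => hgauss x)
    (fun x _ => P.hasDerivAt x) (integrable_exp_neg_sq_mul_eval (derivative P))
    ((integrable_exp_neg_sq_mul_eval (-(2 * X * P))).congr (ae_of_all _ fun x => by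
      simp only [eval_neg, eval_mul, eval_ofNat, eval_X, Pi.mul_apply]; ring))
    (integrable_exp_neg_sq_mul_eval P)
  rw [gaussianIntegral_apply, gaussianIntegral_apply, hparts, ← integral_neg]
  congr 1 with x
  simp only [mul_neg, neg_mul, neg_neg, eval_mul, eval_ofNat, eval_X]
  ring

theorem gaussianIntegral_mul_derivative (P Q : ℝ[X]) :
    gaussianIntegral (P * derivative Q) = gaussianIntegral ((2 * X * P - derivative P) * Q) := by
  have h := gaussianIntegral_derivative (P * Q)
  rw [derivative_mul, map_add] at h
  rw [sub_mul, map_sub, mul_assoc (2 * X), ← h]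
  ring

theorem gaussianIntegral_hermitePoly_succ_mul (n : ℕ) (Q : ℝ[X]) :
    gaussianIntegral (hermitePoly (n + 1) * Q)
      = gaussianIntegral (hermitePoly n * derivative Q) := by
  rw [gaussianIntegral_mul_derivative, hermitePoly_succ_eq_sub_derivative]

noncomputable def hermiteNormSq (n : ℕ) : ℝ := 2 ^ n * n ! * √π

theorem hermiteNormSq_succ (n : ℕ) : hermiteNormSq (n + 1) = 2 * (n + 1) * hermiteNormSq n := by
  simp only [hermiteNormSq, pow_succ, Nat.factorial_succ]; push_cast; ring

theorem gaussianIntegral_hermitePoly_mul_hermitePoly (m n : ℕ) :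
    gaussianIntegral (hermitePoly m * hermitePoly n) = if m = n then hermiteNormSq n else 0 := by
  induction m generalizing n with
  | zero =>
    cases n with
    | zero => simp [hermitePoly, hermiteNormSq, gaussianIntegral_one]
    | succ k => rw [mul_comm, gaussianIntegral_hermitePoly_succ_mul]; simp [hermitePoly]
  | succ m ih =>
    rw [gaussianIntegral_hermitePoly_succ_mul, derivative_hermitePoly, mul_left_comm,
      show 2 * (n : ℝ[X]) = C (2 * (n : ℝ)) by simp [C_ofNat], C_mul', map_smul, ih, smul_eq_mul]
    cases n with
    | zero => simp
    | succ k => simp [hermiteNormSq_succ]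

noncomputable def QHermiteCoeff (n : ℤ) : ℝ := n.sign * (2 * √n.natAbs)

-- At `n = 0` the coefficient vanishes, so the truncated index `2 * 0 - 1 = 0` does no harm.
noncomputable def QHermitePoly (n : ℤ) : ℝ[X] :=
  hermitePoly (2 * n.natAbs) + C (QHermiteCoeff n) * hermitePoly (2 * n.natAbs - 1)

theorem eval_QHermitePoly (n : ℤ) (x : ℝ) : (QHermitePoly n).eval x = QHermite n x := by
  rcases lt_trichotomy n 0 with hn | rfl | hn
  · simp [QHermitePoly, QHermiteCoeff, QHermite, eval_hermitePoly, Int.sign_eq_neg_one_of_neg hn,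
      hn.ne, hn.not_gt]
  · simp [QHermitePoly, QHermiteCoeff, QHermite, hermitePoly]
  · simp [QHermitePoly, QHermiteCoeff, QHermite, eval_hermitePoly, Int.sign_eq_one_of_pos hn,
      hn.ne', hn]

theorem QHermiteCoeff_mul_QHermiteCoeff_mul_hermiteNormSq {n m : ℤ} (h : n.natAbs = m.natAbs) :
    QHermiteCoeff n * QHermiteCoeff m * hermiteNormSq (2 * n.natAbs - 1)
      = (n * m).sign * hermiteNormSq (2 * n.natAbs) := by
  rcases eq_or_ne n 0 with rfl | hn
  · simp [QHermiteCoeff]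
  obtain ⟨j, hj⟩ : ∃ j, 2 * n.natAbs = j + 1 := ⟨2 * n.natAbs - 1, by omega⟩
  have hsqrt : √(n.natAbs : ℝ) * √(m.natAbs : ℝ) = n.natAbs := by
    rw [← h, Real.mul_self_sqrt (Nat.cast_nonneg _)]
  have hj' : ((j : ℝ) + 1) = 2 * n.natAbs := by exact_mod_cast hj.symm
  rw [hj, Nat.add_sub_cancel, hermiteNormSq_succ, QHermiteCoeff, QHermiteCoeff, Int.sign_mul,
    Int.cast_mul, hj']
  linear_combination 4 * (n.sign : ℝ) * m.sign * hermiteNormSq j * hsqrt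

theorem gaussianIntegral_QHermitePoly_mul_QHermitePoly (n m : ℤ) :
    gaussianIntegral (QHermitePoly n * QHermitePoly m)
      = if n.natAbs = m.natAbs then (1 + (n * m).sign) * hermiteNormSq (2 * n.natAbs) else 0 := by
  simp only [QHermitePoly, add_mul, mul_add, C_mul', smul_mul_assoc, mul_smul_comm, map_add,
    map_smul, smul_eq_mul, gaussianIntegral_hermitePoly_mul_hermitePoly]
  by_cases h : n.natAbs = m.natAbs
  · rcases eq_or_ne n 0 with rfl | hn
    · obtain rfl : m = 0 := by omega
      simp [QHermiteCoeff]
    have h₁ : 2 * n.natAbs - 1 ≠ 2 * n.natAbs := by omega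
    rw [← h, ← QHermiteCoeff_mul_QHermiteCoeff_mul_hermiteNormSq h]
    simp only [h₁, h₁.symm, if_true, if_false]
    ring
  · have h₁ : 2 * n.natAbs ≠ 2 * m.natAbs := by omega
    have h₂ : 2 * n.natAbs - 1 ≠ 2 * m.natAbs := by omega
    have h₃ : 2 * n.natAbs ≠ 2 * m.natAbs - 1 := by omega
    have h₄ : 2 * n.natAbs - 1 ≠ 2 * m.natAbs - 1 := by omega
    simp only [h, h₁, h₂, h₃, h₄, if_false]
    ring

theorem integral_exp_neg_sq_mul_QHermite_mul_QHermite (n m : ℤ) :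
    ∫ x : ℝ, exp (-x ^ 2) * QHermite n x * QHermite m x
      = if n.natAbs = m.natAbs then (1 + (n * m).sign) * hermiteNormSq (2 * n.natAbs) else 0 := by
  rw [← gaussianIntegral_QHermitePoly_mul_QHermitePoly, gaussianIntegral_apply]
  simp only [eval_mul, eval_QHermitePoly, mul_assoc]

/-- Orthogonality of the Hermite-type Dunkl-SUSY polynomials. -/
theorem QHermite_orthogonality :
    (∀ n m : ℤ, n ≠ m → ∫ x : ℝ, Real.exp (-x ^ 2) * QHermite n x * QHermite m x = 0) ∧
    (∀ n : ℤ, 1 ≤ n.natAbs →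
      ∫ x : ℝ, Real.exp (-x ^ 2) * QHermite n x ^ 2
        = 2 * 2 ^ (2 * n.natAbs) * Nat.factorial (2 * n.natAbs) * Real.sqrt Real.pi) := by
  refine ⟨fun n m hnm => ?_, fun n hn => ?_⟩
  · rw [integral_exp_neg_sq_mul_QHermite_mul_QHermite, ite_eq_right_iff]
    intro h
    have hm : m = -n := by omega
    rw [hm, mul_neg, Int.sign_neg, Int.sign_eq_one_of_pos (mul_self_pos.2 (by omega))]
    simp
  · simp_rw [sq (QHermite n _), ← mul_assoc]
    rw [integral_exp_neg_sq_mul_QHermite_mul_QHermite, if_pos rfl,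
      Int.sign_eq_one_of_pos (mul_self_pos.2 (by omega)), hermiteNormSq]
    push_cast
    ring
end

section
/- (Theorem 5.1, sufficiency.) Let μ be a measure on ℝ and (S_n)_{n≥0} measurable real-valued functions with S_j·S_l μ-integrable for all j, l, satisfying the orthogonality relations ∫ S_j·S_l dμ = k_j·δ_{jl} with k_j > 0 for all j. For n ≥ 1 set a_n = √(k_{2n}/k_{2n−1}) and define Q_n = S_{2n} + a_n·S_{2n−1}, Q_{−n} = S_{2n} − a_n·S_{2n−1}, and Q_0 = S_0. Then the doubly indexed family (Q_n)_{n∈ℤ} is orthogonal: ∫ Q_n·Q_m dμ = 0 for all integers n ≠ m. If moreover each S_j has parity S_j(−x) = (−1)^j·S_j(x), then Q_{−n}(x) = Q_n(−x) for all n ≥ 1 and x ∈ ℝ. -/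
/-!
Writing `Q n = S_{2|n|} + c_n S_{2|n|-1}`, the product `Q n * Q m` expands into four products
`S_j S_l`. If `|n| ≠ |m|` the index sets `{2|n|, 2|n|-1}` and `{2|m|, 2|m|-1}` are disjoint, so all
four integrals vanish. If `m = -n ≠ 0` only the diagonal terms survive and give
`k_{2n} - a_n² k_{2n-1} = 0`, which is how `a_n` is chosen. The reflection property is the
parity of `S_{2n}` and `S_{2n-1}`.
-/

open MeasureTheory

theorem integral_add_mul_mul_add_mul {α : Type*} [MeasurableSpace α] {μ : Measure α}
    {f g f' g' : α → ℝ} (c d : ℝ)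
    (hff' : Integrable (fun x => f x * f' x) μ) (hfg' : Integrable (fun x => f x * g' x) μ)
    (hgf' : Integrable (fun x => g x * f' x) μ) (hgg' : Integrable (fun x => g x * g' x) μ) :
    ∫ x, (f x + c * g x) * (f' x + d * g' x) ∂μ =
      ∫ x, f x * f' x ∂μ + d * ∫ x, f x * g' x ∂μ
        + c * ∫ x, g x * f' x ∂μ + c * d * ∫ x, g x * g' x ∂μ := by
  have hexpand : (fun x => (f x + c * g x) * (f' x + d * g' x)) =
      fun x => (f x * f' x + d * (f x * g' x)) + (c * (g x * f' x) + c * d * (g x * g' x)) := by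
    funext x; ring
  have hf : Integrable (fun x => f x * f' x + d * (f x * g' x)) μ := hff'.add (hfg'.const_mul d)
  have hg : Integrable (fun x => c * (g x * f' x) + c * d * (g x * g' x)) μ :=
    (hgf'.const_mul c).add (hgg'.const_mul (c * d))
  rw [hexpand, integral_add hf hg, integral_add hff' (hfg'.const_mul d),
    integral_add (hgf'.const_mul c) (hgg'.const_mul (c * d)),
    integral_const_mul, integral_const_mul, integral_const_mul]
  ring

section OrthogonalSystem

variable {α : Type*} [MeasurableSpace α] {μ : Measure α} {S : ℕ → α → ℝ} {k : ℕ → ℝ}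

theorem integral_pair_mul_pair_of_ne
    (hint : ∀ j l, Integrable (fun x => S j x * S l x) μ)
    (horth : ∀ j l, ∫ x, S j x * S l x ∂μ = if j = l then k j else 0)
    {p q : ℕ} (hpq : p ≠ q) (c d : ℝ) :
    ∫ x, (S (2 * p) x + c * S (2 * p - 1) x) * (S (2 * q) x + d * S (2 * q - 1) x) ∂μ = 0 := by
  rw [integral_add_mul_mul_add_mul c d (hint _ _) (hint _ _) (hint _ _) (hint _ _),
    horth, horth, horth, horth, if_neg (by omega), if_neg (by omega), if_neg (by omega),
    if_neg (by omega)]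
  ring

theorem integral_pair_mul_pair_self
    (hint : ∀ j l, Integrable (fun x => S j x * S l x) μ)
    (horth : ∀ j l, ∫ x, S j x * S l x ∂μ = if j = l then k j else 0)
    {p : ℕ} (hp : 1 ≤ p) (c d : ℝ) :
    ∫ x, (S (2 * p) x + c * S (2 * p - 1) x) * (S (2 * p) x + d * S (2 * p - 1) x) ∂μ =
      k (2 * p) + c * d * k (2 * p - 1) := by
  rw [integral_add_mul_mul_add_mul c d (hint _ _) (hint _ _) (hint _ _) (hint _ _),
    horth, horth, horth, horth, if_pos rfl, if_neg (by omega), if_neg (by omega), if_pos rfl]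
  ring

end OrthogonalSystem

theorem exists_eq_pair {α : Type*} {S : ℕ → α → ℝ} {Q : ℤ → α → ℝ} (a : ℕ → ℝ)
    (hQ0 : ∀ x, Q 0 x = S 0 x)
    (hQp : ∀ n : ℕ, 1 ≤ n → ∀ x, Q (n : ℤ) x = S (2 * n) x + a n * S (2 * n - 1) x)
    (hQm : ∀ n : ℕ, 1 ≤ n → ∀ x, Q (-(n : ℤ)) x = S (2 * n) x - a n * S (2 * n - 1) x)
    (n : ℤ) : ∃ c : ℝ, ∀ x, Q n x = S (2 * n.natAbs) x + c * S (2 * n.natAbs - 1) x := by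
  obtain ⟨p, rfl | rfl⟩ := Int.eq_nat_or_neg n <;>
    simp only [Int.natAbs_neg, Int.natAbs_natCast] <;>
    rcases Nat.eq_zero_or_pos p with rfl | hp
  · exact ⟨0, fun x => by simp [hQ0]⟩
  · exact ⟨a p, hQp p hp⟩
  · exact ⟨0, fun x => by simp [hQ0]⟩
  · exact ⟨-a p, fun x => by rw [hQm p hp x, neg_mul, ← sub_eq_add_neg]⟩

theorem dunkl_susy_sufficiency_general (μ : Measure ℝ) (S : ℕ → ℝ → ℝ) (k : ℕ → ℝ)
    (hint : ∀ j l, Integrable (fun x => S j x * S l x) μ)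
    (horth : ∀ j l, ∫ x, S j x * S l x ∂μ = if j = l then k j else 0)
    (hk : ∀ j, 0 < k j)
    (Q : ℤ → ℝ → ℝ)
    (hQ0 : ∀ x, Q 0 x = S 0 x)
    (hQp : ∀ n : ℕ, 1 ≤ n → ∀ x,
      Q (n : ℤ) x = S (2 * n) x + Real.sqrt (k (2 * n) / k (2 * n - 1)) * S (2 * n - 1) x)
    (hQm : ∀ n : ℕ, 1 ≤ n → ∀ x,
      Q (-(n : ℤ)) x = S (2 * n) x - Real.sqrt (k (2 * n) / k (2 * n - 1)) * S (2 * n - 1) x) :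
    (∀ n m : ℤ, n ≠ m → ∫ x, Q n x * Q m x ∂μ = 0) ∧
    ((∀ j : ℕ, ∀ x : ℝ, S j (-x) = (-1 : ℝ) ^ j * S j x) →
      ∀ n : ℕ, 1 ≤ n → ∀ x : ℝ, Q (-(n : ℤ)) x = Q (n : ℤ) (-x)) := by
  refine ⟨fun n m hnm => ?_, fun hpar n hn x => ?_⟩
  · by_cases habs : n.natAbs = m.natAbs
    · obtain ⟨p, hp, hopp⟩ :
          ∃ p : ℕ, 1 ≤ p ∧ (n = p ∧ m = -p ∨ n = -p ∧ m = p) := ⟨n.natAbs, by omega, by omega⟩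
      have ha : Real.sqrt (k (2 * p) / k (2 * p - 1)) ^ 2 * k (2 * p - 1) = k (2 * p) := by
        rw [Real.sq_sqrt (div_nonneg (hk _).le (hk _).le), div_mul_cancel₀ _ (hk _).ne']
      rcases hopp with ⟨rfl, rfl⟩ | ⟨rfl, rfl⟩ <;>
      · simp only [hQp p hp, hQm p hp, sub_eq_add_neg, ← neg_mul]
        rw [integral_pair_mul_pair_self hint horth hp]
        linear_combination -ha
    · obtain ⟨c, hc⟩ := exists_eq_pair _ hQ0 hQp hQm n
      obtain ⟨d, hd⟩ := exists_eq_pair _ hQ0 hQp hQm m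
      simp only [hc, hd]
      exact integral_pair_mul_pair_of_ne hint horth habs c d
  · have hodd : (-1 : ℝ) ^ (2 * n - 1) = -1 := Odd.neg_one_pow ⟨n - 1, by omega⟩
    rw [hQm n hn x, hQp n hn (-x), hpar, hpar, hodd, pow_mul, neg_one_sq, one_pow]
    ring

/-- Theorem 5.1, sufficiency: the family `Q₀ = S₀`, `Q_{±n} = S_{2n} ± a_n S_{2n-1}`
(with `a_n = √(k_{2n}/k_{2n-1})`) built from an orthogonal family `(S_j)` is orthogonal,
and inherits the reflection property from the parity of the `S_j`. -/
theorem dunkl_susy_sufficiency (μ : Measure ℝ) (S : ℕ → ℝ → ℝ) (k : ℕ → ℝ)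
    (hmeas : ∀ j, Measurable (S j))
    (hint : ∀ j l, Integrable (fun x => S j x * S l x) μ)
    (horth : ∀ j l, ∫ x, S j x * S l x ∂μ = if j = l then k j else 0)
    (hk : ∀ j, 0 < k j)
    (Q : ℤ → ℝ → ℝ)
    (hQ0 : ∀ x, Q 0 x = S 0 x)
    (hQp : ∀ n : ℕ, 1 ≤ n → ∀ x,
      Q (n : ℤ) x = S (2 * n) x + Real.sqrt (k (2 * n) / k (2 * n - 1)) * S (2 * n - 1) x)
    (hQm : ∀ n : ℕ, 1 ≤ n → ∀ x,
      Q (-(n : ℤ)) x = S (2 * n) x - Real.sqrt (k (2 * n) / k (2 * n - 1)) * S (2 * n - 1) x) :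
    (∀ n m : ℤ, n ≠ m → ∫ x, Q n x * Q m x ∂μ = 0) ∧
    ((∀ j : ℕ, ∀ x : ℝ, S j (-x) = (-1 : ℝ) ^ j * S j x) →
      ∀ n : ℕ, 1 ≤ n → ∀ x : ℝ, Q (-(n : ℤ)) x = Q (n : ℤ) (-x)) :=
  dunkl_susy_sufficiency_general μ S k hint horth hk Q hQ0 hQp hQm
end

section
/- (Theorem 5.2, first recurrence relation.) Let (γ_n)_{n≥1} and (a_n)_{n≥1} be real numbers with a_n ≠ 0 for all n ≥ 1, and define polynomials S_{−1} = 0, S_0 = 1, S_n(x) = x·S_{n−1}(x) − γ_n·S_{n−2}(x) for n ≥ 1. Set Q_0 = 1 and, for n ≥ 1, Q_n = S_{2n} + a_n·S_{2n−1}, Q_{−n} = S_{2n} − a_n·S_{2n−1}. Then for every n ≥ 1, the polynomial identity Q_{n+1}(x) = (1/2)·[x² + (a_{n+1} − γ_{2n+1}/a_n)·x − γ_{2n+2} − γ_{2n+1}·a_{n+1}/a_n]·Q_n(x) + (1/2)·[x² + (a_{n+1} + γ_{2n+1}/a_n)·x − γ_{2n+2} + γ_{2n+1}·a_{n+1}/a_n]·Q_{−n}(x)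 holds in ℝ[x]. -/
open Polynomial

/-
Both `Q_{n+1}` and the pair `Q_{±n}` are determined by `S_{2n}` and `S_{2n-1}`: two steps of the
three-term recurrence give `Q_{n+1} = U·S_{2n} + V·S_{2n-1}` with
`U = x² + a_{n+1} x - γ_{2n+2}` and `V = -γ_{2n+1}(x + a_{n+1})`, while `S_{2n} = (Q_n + Q_{-n})/2`
and `S_{2n-1} = (Q_n - Q_{-n})/(2a_n)`. Substituting yields the coefficients `(U ± V/a_n)/2`.
-/

theorem two_step_recurrence {R : Type*} [CommRing R] (γ : ℕ → R) (S : ℕ → R[X])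
    (hSrec : ∀ n : ℕ, S (n + 2) = X * S (n + 1) - C (γ (n + 2)) * S n) (b : R) (m : ℕ) :
    S (m + 3) + C b * S (m + 2) =
      (X ^ 2 + C b * X - C (γ (m + 3))) * S (m + 1) - C (γ (m + 2)) * (X + C b) * S m := by
  rw [hSrec (m + 1), hSrec m]
  ring

theorem mul_add_mul_eq_half_mul_add_add_half_mul_sub {R : Type*} [CommRing R]
    {h a b : R} (hh : 2 * h = 1) (hab : a * b = 1) (u v s t : R) :
    u * s + v * t = h * (u + b * v) * (s + a * t) + h * (u - b * v) * (s - a * t) := by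
  linear_combination (-(u * s) - v * t) * hh - 2 * h * v * t * hab

theorem dunkl_susy_recurrence_first_general (γ a : ℕ → ℝ) (ha : ∀ n, 1 ≤ n → a n ≠ 0)
    (S : ℕ → Polynomial ℝ)
    (hSrec : ∀ n : ℕ, S (n + 2) = X * S (n + 1) - C (γ (n + 2)) * S n)
    (Qp Qm : ℕ → Polynomial ℝ)
    (hQp : ∀ n : ℕ, 1 ≤ n → Qp n = S (2 * n) + C (a n) * S (2 * n - 1))
    (hQm : ∀ n : ℕ, 1 ≤ n → Qm n = S (2 * n) - C (a n) * S (2 * n - 1)) :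
    ∀ n : ℕ, 1 ≤ n →
      Qp (n + 1) =
        C (1 / 2) * (X ^ 2 + C (a (n + 1) - γ (2 * n + 1) / a n) * X
          - C (γ (2 * n + 2) + γ (2 * n + 1) * a (n + 1) / a n)) * Qp n
        + C (1 / 2) * (X ^ 2 + C (a (n + 1) + γ (2 * n + 1) / a n) * X
          - C (γ (2 * n + 2) - γ (2 * n + 1) * a (n + 1) / a n)) * Qm n := by
  intro n hn
  obtain ⟨m, hm⟩ : ∃ m, 2 * n = m + 1 := ⟨2 * n - 1, by omega⟩
  have hhalf : 2 * C (1 / 2 : ℝ) = 1 := by rw [← C_ofNat, ← C_mul]; norm_num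
  have hinv : C (a n) * C (a n)⁻¹ = 1 := by rw [← C_mul, mul_inv_cancel₀ (ha n hn), C_1]
  have hnext : Qp (n + 1) = (X ^ 2 + C (a (n + 1)) * X - C (γ (2 * n + 2))) * S (2 * n)
      + (-C (γ (2 * n + 1)) * (X + C (a (n + 1)))) * S (2 * n - 1) := by
    rw [hQp _ (by omega), show 2 * (n + 1) - 1 = m + 2 by omega, show 2 * (n + 1) = m + 3 by omega,
      two_step_recurrence γ S hSrec, hm, Nat.add_sub_cancel]
    ring
  rw [hnext, hQp n hn, hQm n hn, mul_add_mul_eq_half_mul_add_add_half_mul_sub hhalf hinv]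
  simp only [div_eq_mul_inv, map_sub, map_add, map_mul]
  ring

/-- Theorem 5.2, first recurrence relation for the Dunkl-SUSY polynomials
`Q_{±n} = S_{2n} ± a_n S_{2n-1}` built from the monic symmetric orthogonal
polynomials `S_n(x) = x·S_{n-1}(x) - γ_n·S_{n-2}(x)`. -/
theorem dunkl_susy_recurrence_first (γ a : ℕ → ℝ) (ha : ∀ n, 1 ≤ n → a n ≠ 0)
    (S : ℕ → Polynomial ℝ)
    (hS0 : S 0 = 1)
    (hS1 : S 1 = X)
    (hSrec : ∀ n : ℕ, S (n + 2) = X * S (n + 1) - C (γ (n + 2)) * S n)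
    (Qp Qm : ℕ → Polynomial ℝ)
    (hQp : ∀ n : ℕ, 1 ≤ n → Qp n = S (2 * n) + C (a n) * S (2 * n - 1))
    (hQm : ∀ n : ℕ, 1 ≤ n → Qm n = S (2 * n) - C (a n) * S (2 * n - 1)) :
    ∀ n : ℕ, 1 ≤ n →
      Qp (n + 1) =
        C (1 / 2) * (X ^ 2 + C (a (n + 1) - γ (2 * n + 1) / a n) * X
          - C (γ (2 * n + 2) + γ (2 * n + 1) * a (n + 1) / a n)) * Qp n
        + C (1 / 2) * (X ^ 2 + C (a (n + 1) + γ (2 * n + 1) / a n) * X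
          - C (γ (2 * n + 2) - γ (2 * n + 1) * a (n + 1) / a n)) * Qm n :=
  dunkl_susy_recurrence_first_general γ a ha S hSrec Qp Qm hQp hQm
end

section
/- (Theorem 5.2, second recurrence relation.) Let (γ_n)_{n≥1} and (a_n)_{n≥1} be real numbers with a_n ≠ 0 for all n ≥ 1, and define polynomials S_{−1} = 0, S_0 = 1, S_n(x) = x·S_{n−1}(x) − γ_n·S_{n−2}(x) for n ≥ 1. Set Q_0 = 1 and, for n ≥ 1, Q_n = S_{2n} + a_n·S_{2n−1}, Q_{−n} = S_{2n} − a_n·S_{2n−1}. Then for every n ≥ 1, the polynomial identity Q_{−(n+1)}(x) = (1/2)·[x² − (a_{n+1} + γ_{2n+1}/a_n)·x − γ_{2n+2} + γ_{2n+1}·a_{n+1}/a_n]·Q_n(x) + (1/2)·[x² − (a_{n+1} − γ_{2n+1}/a_n)·x − γ_{2n+2} − γ_{2n+1}·a_{n+1}/a_n]·Q_{−n}(x) holds in ℝ[x]. -/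
/-!
Two steps of the recurrence write `Q_{-(n+1)}` as a combination of `S_{2n}` and `S_{2n-1}`,
with coefficients quadratic and linear in `x`. Since `S_{2n} = (Q_n + Q_{-n}) / 2` and
`a_n S_{2n-1} = (Q_n - Q_{-n}) / 2`, substituting gives the recurrence.
-/

open Polynomial

theorem Polynomial.sub_C_mul_of_three_term_recurrence {R : Type*} [CommRing R] {γ : ℕ → R}
    {S : ℕ → R[X]} (hS : ∀ n, S (n + 2) = X * S (n + 1) - C (γ (n + 2)) * S n) (c : R) {k : ℕ}
    (hk : 1 ≤ k) :
    S (k + 2) - C c * S (k + 1) =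
      ((X - C c) * X - C (γ (k + 2))) * S k - (X - C c) * C (γ (k + 1)) * S (k - 1) := by
  obtain ⟨j, rfl⟩ := Nat.exists_eq_add_of_le' hk
  rw [Nat.add_sub_cancel]
  linear_combination hS (j + 1) + (X - C c) * hS j

theorem add_mul_eq_half_mul_add_half_mul {R : Type*} [CommRing R] {half a a' : R}
    (h_half : half * 2 = 1) (ha : a' * a = 1) (A B s t : R) :
    A * s + B * t =
      half * (A + a' * B) * (s + a * t) + half * (A - a' * B) * (s - a * t) := by
  linear_combination (-(A * s) - a' * a * B * t) * h_half - B * t * ha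

theorem dunkl_susy_recurrence_second_general (γ a : ℕ → ℝ) (ha : ∀ n, 1 ≤ n → a n ≠ 0)
    (S : ℕ → Polynomial ℝ)
    (hSrec : ∀ n : ℕ, S (n + 2) = X * S (n + 1) - C (γ (n + 2)) * S n)
    (Qp Qm : ℕ → Polynomial ℝ)
    (hQp : ∀ n : ℕ, 1 ≤ n → Qp n = S (2 * n) + C (a n) * S (2 * n - 1))
    (hQm : ∀ n : ℕ, 1 ≤ n → Qm n = S (2 * n) - C (a n) * S (2 * n - 1)) :
    ∀ n : ℕ, 1 ≤ n →
      Qm (n + 1) =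
        C (1 / 2) * (X ^ 2 - C (a (n + 1) + γ (2 * n + 1) / a n) * X
          - C (γ (2 * n + 2) - γ (2 * n + 1) * a (n + 1) / a n)) * Qp n
        + C (1 / 2) * (X ^ 2 - C (a (n + 1) - γ (2 * n + 1) / a n) * X
          - C (γ (2 * n + 2) + γ (2 * n + 1) * a (n + 1) / a n)) * Qm n := by
  intro n hn
  have h_half : C (1 / 2 : ℝ) * 2 = 1 := by
    rw [← C_ofNat, ← C_mul]; norm_num
  have h_inv : C (a n)⁻¹ * C (a n) = 1 := by
    rw [← C_mul, inv_mul_cancel₀ (ha n hn), C_1]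
  have hQm_succ : Qm (n + 1) =
      ((X - C (a (n + 1))) * X - C (γ (2 * n + 2))) * S (2 * n)
        + (-(X - C (a (n + 1))) * C (γ (2 * n + 1))) * S (2 * n - 1) := by
    rw [hQm _ (by omega), show 2 * (n + 1) = 2 * n + 2 by ring,
      show 2 * n + 2 - 1 = 2 * n + 1 by omega,
      sub_C_mul_of_three_term_recurrence hSrec _ (by omega)]
    ring
  rw [hQm_succ, add_mul_eq_half_mul_add_half_mul h_half h_inv, ← hQp n hn, ← hQm n hn]
  congr 3 <;> simp only [div_eq_mul_inv, map_add, map_sub, map_mul] <;> ring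

/-- Theorem 5.2, second recurrence relation for the Dunkl-SUSY polynomials
`Q_{±n} = S_{2n} ± a_n S_{2n-1}` built from the monic symmetric orthogonal
polynomials `S_n(x) = x·S_{n-1}(x) - γ_n·S_{n-2}(x)`. -/
theorem dunkl_susy_recurrence_second (γ a : ℕ → ℝ) (ha : ∀ n, 1 ≤ n → a n ≠ 0)
    (S : ℕ → Polynomial ℝ)
    (hS0 : S 0 = 1)
    (hS1 : S 1 = X)
    (hSrec : ∀ n : ℕ, S (n + 2) = X * S (n + 1) - C (γ (n + 2)) * S n)
    (Qp Qm : ℕ → Polynomial ℝ)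
    (hQp : ∀ n : ℕ, 1 ≤ n → Qp n = S (2 * n) + C (a n) * S (2 * n - 1))
    (hQm : ∀ n : ℕ, 1 ≤ n → Qm n = S (2 * n) - C (a n) * S (2 * n - 1)) :
    ∀ n : ℕ, 1 ≤ n →
      Qm (n + 1) =
        C (1 / 2) * (X ^ 2 - C (a (n + 1) + γ (2 * n + 1) / a n) * X
          - C (γ (2 * n + 2) - γ (2 * n + 1) * a (n + 1) / a n)) * Qp n
        + C (1 / 2) * (X ^ 2 - C (a (n + 1) - γ (2 * n + 1) / a n) * X
          - C (γ (2 * n + 2) + γ (2 * n + 1) * a (n + 1) / a n)) * Qm n :=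
  dunkl_susy_recurrence_second_general γ a ha S hSrec Qp Qm hQp hQm
end
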